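/- Let 1 ≤ k < n, κ_1 < … < κ_n real, c_1, …, c_n real, and let A be a totally nonnegative real k×n matrix of rank k in reduced row echelon form with pivot columns i_1 < … < i_k. Fix r such that row r of A equals the standard unit vector e_{i_r}. Let w_1(x), …, w_k(x) be the Darboux coefficients of (κ, A, c), and define g_m(x) = f_m'(x) − κ_{i_r} f_m(x) for m ∈ {1,…,k}∖{r}. Then: (i) the (k−1)×(k−1) Wronskian of the functions (g_m)_{m≠r} is nonzero for every x; (ii) the unique reals w'_1(x), …, w'_{k−1}(x) solving g_m^{(k−1)}(x) = Σ_{s=1}^{k−1} w'_s(x) g_m^{(k−1−s)}(x) for all m ≠ r satisfy, for all ζ, x ∈ ℝ, ζ^k − Σ_{s=1}^k w_s(x) ζ^{k−s} = (ζ − κ_{i_r}) · ( ζ^{k−1} − Σ_{s=1}^{k−1} w'_s(x) ζ^{k−1−s} ). In particular κ_{i_r} is a root of the Sato characteristic polynomial p(·, x) for every x. -/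

import Mathlib

open scoped BigOperators

/-- The `m × m` maximal minor of a real `m × n` matrix `A` on the set of columns `I`
(defined to be `0` when `I` does not have exactly `m` elements). -/
noncomputable def maxMinor {m n : ℕ} (A : Matrix (Fin m) (Fin n) ℝ)
    (I : Finset (Fin n)) : ℝ :=
  if h : I.card = m then
    (A.submatrix id fun j => ((I.orderIsoOfFin h) j : Fin n)).det
  else 0

/-!
The Wronskian matrix of `f_i = Σ_j A_ij e^{κ_j x + c_j}` is `A · Eᵀ`, where
`E_lj = κ_j^l e^{κ_j x + c_j}` has positive maximal minors (exponentials times Vandermonde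
determinants), so by Cauchy–Binet the Wronskian `τ` is a sum of nonnegative terms, one of which
comes from the pivot minor `1` of the RREF matrix: `τ > 0`.

A polynomial `P` acts on the jet of `Σ_j a_j e^{κ_j x + c_j}` by returning
`Σ_j a_j P(κ_j) e^{κ_j x + c_j}`. Trading the columns `X^l` of the Wronskian for the monic
polynomials `1, X^{l-1}(X - μ)`, with `μ = κ_{i_r}`, leaves its determinant unchanged; the pure
exponential row `r` then has a single nonzero entry, and expanding along it gives
`τ = ± e^{μ x + c_{i_r}} · Wr(g)`, so `Wr(g) ≠ 0`. Finally `p(·, x)` and `(X - μ) p'(·, x)` are both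
monic of degree `k + 1` and annihilate the jets of every `f_i` at `x`; their difference has
degree `≤ k`, so its coefficient vector lies in the kernel of the invertible Wronskian matrix.
-/

open Finset Matrix Polynomial

theorem Finset.sum_image_eq_eq_sum_perm {α M : Type*} [LinearOrder α] [Fintype α]
    [AddCommMonoid M] {m : ℕ} (I : Finset α) (h : #I = m) (F : (Fin m → α) → M) :
    ∑ φ : Fin m → α with univ.image φ = I, F φ =
      ∑ σ : Equiv.Perm (Fin m), F (I.orderEmbOfFin h ∘ ⇑σ) := by
  set e := I.orderEmbOfFin h
  have he : ∀ a, a ∈ I ↔ ∃ l, e l = a := fun a => by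
    rw [← mem_coe, ← range_orderEmbOfFin I h, Set.mem_range]
  refine (sum_nbij (fun σ : Equiv.Perm (Fin m) => e ∘ ⇑σ) (fun σ _ => ?_)
    (fun σ _ τ _ hστ => ?_) (fun φ hφ => ?_) (fun _ _ => rfl)).symm
  · refine mem_filter.mpr ⟨mem_univ _, ?_⟩
    ext a
    simp only [mem_univ, true_and, mem_image, Function.comp_apply, he]
    exact (σ.surjective.exists (p := fun l => e l = a)).symm
  · exact Equiv.ext fun l => e.injective (congrFun hστ l)
  · have hφ : univ.image φ = I := (mem_filter.mp hφ).2
    have hinj : Function.Injective φ := by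
      rw [← Set.injOn_univ, ← coe_univ, ← card_image_iff, hφ, h, card_univ, Fintype.card_fin]
    have hrange : Set.range φ = Set.range e := by
      rw [range_orderEmbOfFin, ← hφ, coe_image, coe_univ, Set.image_univ]
    refine ⟨(Equiv.ofInjective φ hinj).trans
      ((Equiv.setCongr hrange).trans (Equiv.ofInjective e e.injective).symm),
      mem_coe.mpr (mem_univ _), funext fun l => ?_⟩
    simp only [Function.comp_apply, Equiv.trans_apply, Equiv.apply_ofInjective_symm,
      Equiv.setCongr_apply, Equiv.ofInjective_apply]

theorem Matrix.det_mul_transpose_eq_sum_prod_mul_det {m n : ℕ}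
    (A B : Matrix (Fin m) (Fin n) ℝ) :
    (A * Bᵀ).det = ∑ φ : Fin m → Fin n, (∏ l, B l (φ l)) * (A.submatrix id φ).det := by
  rw [← det_transpose, transpose_mul, transpose_transpose]
  have hrows : B * Aᵀ = fun l => ∑ j, B l j • Aᵀ j := by
    ext l i
    simp [mul_apply, mul_comm]
  rw [det, hrows, ← AlternatingMap.coe_multilinearMap, MultilinearMap.map_sum]
  refine sum_congr rfl fun φ _ => ?_
  rw [MultilinearMap.map_smul_univ, smul_eq_mul, AlternatingMap.coe_multilinearMap,
    ← det_transpose]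
  rfl

theorem Matrix.det_mul_transpose_eq_sum_maxMinor {m n : ℕ} (A B : Matrix (Fin m) (Fin n) ℝ) :
    (A * Bᵀ).det = ∑ I : Finset (Fin n), maxMinor A I * maxMinor B I := by
  rw [det_mul_transpose_eq_sum_prod_mul_det, ← sum_fiberwise univ (fun φ => univ.image φ)]
  refine sum_congr rfl fun I _ => ?_
  by_cases h : #I = m
  · set e := I.orderEmbOfFin h
    have hsub : ∀ M : Matrix (Fin m) (Fin n) ℝ,
        M.submatrix id (fun j => ((I.orderIsoOfFin h) j : Fin n)) = M.submatrix id e :=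
      fun M => rfl
    rw [sum_image_eq_eq_sum_perm I h, maxMinor, maxMinor, dif_pos h, dif_pos h, hsub, hsub,
      ← det_transpose (B.submatrix id e), det_apply' (B.submatrix id e)ᵀ, mul_sum]
    refine sum_congr rfl fun σ _ => ?_
    rw [show A.submatrix id (e ∘ ⇑σ) = (A.submatrix id e).submatrix id σ from rfl, det_permute']
    simp only [transpose_apply, submatrix_apply, id_eq, Function.comp_apply]
    ring
  · rw [maxMinor, dif_neg h, zero_mul]
    refine sum_eq_zero fun φ hφ => ?_
    obtain ⟨i, j, hij, hne⟩ : ∃ i j, φ i = φ j ∧ i ≠ j := by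
      by_contra! hinj
      apply h
      rw [← (mem_filter.mp hφ).2, card_image_of_injective _ hinj, card_univ, Fintype.card_fin]
    rw [det_zero_of_column_eq hne fun l => by simp [hij], mul_zero]

theorem Matrix.det_mul_transpose_pos {m n : ℕ} {A B : Matrix (Fin m) (Fin n) ℝ}
    (hA : ∀ I, #I = m → 0 ≤ maxMinor A I) (hA₀ : ∃ I, 0 < maxMinor A I)
    (hB : ∀ I, #I = m → 0 < maxMinor B I) : 0 < (A * Bᵀ).det := by
  have hcard : ∀ I, maxMinor A I ≠ 0 → #I = m := fun I hI => by
    by_contra h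
    exact hI (dif_neg h)
  obtain ⟨I₀, hI₀⟩ := hA₀
  rw [det_mul_transpose_eq_sum_maxMinor]
  refine sum_pos' (fun I _ => ?_) ⟨I₀, mem_univ _, mul_pos hI₀ (hB I₀ (hcard I₀ hI₀.ne'))⟩
  by_cases h : maxMinor A I = 0
  · rw [h, zero_mul]
  · exact mul_nonneg (hA I (hcard I h)) (hB I (hcard I h)).le

theorem Matrix.det_succ_row_of_forall_ne_zero_eq_zero {R : Type*} [CommRing R] {k : ℕ}
    (M : Matrix (Fin (k + 1)) (Fin (k + 1)) R) (r : Fin (k + 1))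
    (h : ∀ l, l ≠ 0 → M r l = 0) :
    M.det = (-1) ^ (r : ℕ) * M r 0 * (M.submatrix r.succAbove Fin.succ).det := by
  rw [det_succ_row M r, Fin.sum_univ_succ,
    sum_eq_zero fun l _ => by rw [h l.succ (Fin.succ_ne_zero l), mul_zero, zero_mul], add_zero,
    Fin.val_zero, add_zero, Fin.succAbove_zero]

theorem maxMinor_image_pivots_eq_one {m n : ℕ} {A : Matrix (Fin m) (Fin n) ℝ}
    {piv : Fin m → Fin n} (hpiv : StrictMono piv) (hpivot1 : ∀ i, A i (piv i) = 1)
    (hpivot0 : ∀ i i', i' ≠ i → A i' (piv i) = 0) : maxMinor A (univ.image piv) = 1 := by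
  have hI : #(univ.image piv) = m := by
    rw [card_image_of_injective _ hpiv.injective, card_univ, Fintype.card_fin]
  have he : ⇑((univ.image piv).orderEmbOfFin hI) = piv :=
    (orderEmbOfFin_unique hI (fun i => mem_image_of_mem piv (mem_univ i)) hpiv).symm
  have hsub : A.submatrix id (fun j => (((univ.image piv).orderIsoOfFin hI) j : Fin n)) = 1 := by
    ext i j
    rw [submatrix_apply, id_eq, coe_orderIsoOfFin_apply, he]
    rcases eq_or_ne i j with rfl | hij
    · rw [hpivot1, one_apply_eq]
    · rw [hpivot0 j i hij, one_apply_ne hij]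
  rw [maxMinor, dif_pos hI, hsub, det_one]

noncomputable def expVandermonde {m n : ℕ} (κ c : Fin n → ℝ) (x : ℝ) :
    Matrix (Fin m) (Fin n) ℝ :=
  of fun l j => κ j ^ (l : ℕ) * Real.exp (κ j * x + c j)

theorem maxMinor_expVandermonde_pos {m n : ℕ} {κ : Fin n → ℝ} (hκ : StrictMono κ)
    (c : Fin n → ℝ) (x : ℝ) {I : Finset (Fin n)} (hI : #I = m) :
    0 < maxMinor (expVandermonde κ c x : Matrix (Fin m) (Fin n) ℝ) I := by
  set e := I.orderEmbOfFin hI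
  have hsub : (expVandermonde κ c x).submatrix id (fun j => ((I.orderIsoOfFin hI) j : Fin n)) =
      of fun l i => Real.exp (κ (e i) * x + c (e i)) * (vandermonde (κ ∘ e))ᵀ l i := by
    ext l i
    simp [expVandermonde, e, mul_comm]
  rw [maxMinor, dif_pos hI, hsub, det_mul_row, det_transpose, det_vandermonde]
  refine mul_pos (prod_pos fun i _ => Real.exp_pos _) (prod_pos fun i _ => prod_pos fun j hj => ?_)
  exact sub_pos.mpr (hκ (e.strictMono (mem_Ioi.mp hj)))

noncomputable def expSum {n : ℕ} (a κ c : Fin n → ℝ) (x : ℝ) : ℝ :=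
  ∑ j, a j * Real.exp (κ j * x + c j)

noncomputable def wronskianMatrix {m : ℕ} (F : Fin m → ℝ → ℝ) (x : ℝ) :
    Matrix (Fin m) (Fin m) ℝ :=
  of fun i l => iteratedDeriv l (F i) x

section expSum

variable {n : ℕ} (κ c : Fin n → ℝ)

theorem expSum_sub (a b : Fin n → ℝ) (x : ℝ) :
    expSum (fun j => a j - b j) κ c x = expSum a κ c x - expSum b κ c x := by
  simp only [expSum, sub_mul, sum_sub_distrib]

theorem expSum_mul_of_eq_single {a : Fin n → ℝ} {p : Fin n} (hap : a p = 1)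
    (ha : ∀ j, j ≠ p → a j = 0) (h : Fin n → ℝ) (x : ℝ) :
    expSum (fun j => a j * h j) κ c x = h p * Real.exp (κ p * x + c p) := by
  rw [expSum, sum_eq_single p (fun j _ hj => by rw [ha j hj, zero_mul, zero_mul])
    (fun hp => absurd (mem_univ p) hp), hap, one_mul]

theorem hasDerivAt_expSum (a : Fin n → ℝ) (x : ℝ) :
    HasDerivAt (expSum a κ c) (expSum (fun j => a j * κ j) κ c x) x := by
  refine HasDerivAt.fun_sum fun j _ => ?_
  have h := ((((hasDerivAt_id' x).const_mul (κ j)).add_const (c j)).exp).const_mul (a j)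
  rwa [mul_one, mul_left_comm, mul_comm] at h

theorem deriv_expSum_sub_mul (a : Fin n → ℝ) (μ x : ℝ) :
    deriv (expSum a κ c) x - μ * expSum a κ c x = expSum (fun j => a j * (κ j - μ)) κ c x := by
  rw [(hasDerivAt_expSum κ c a x).deriv]
  simp only [expSum, mul_sum, ← sum_sub_distrib]
  exact sum_congr rfl fun j _ => by ring

theorem iteratedDeriv_expSum (a : Fin n → ℝ) (l : ℕ) :
    iteratedDeriv l (expSum a κ c) = expSum (fun j => a j * κ j ^ l) κ c := by
  induction l generalizing a with
  | zero => simp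
  | succ l ih =>
    rw [iteratedDeriv_succ', funext fun x => (hasDerivAt_expSum κ c a x).deriv, ih]
    simp only [mul_assoc, pow_succ']

theorem sum_coeff_mul_iteratedDeriv_expSum {m : ℕ} (a : Fin n → ℝ) {P : ℝ[X]}
    (hP : P ∈ degreeLT ℝ m) (x : ℝ) :
    ∑ l : Fin m, P.coeff l * iteratedDeriv l (expSum a κ c) x =
      expSum (fun j => a j * P.eval (κ j)) κ c x := by
  simp only [iteratedDeriv_expSum, expSum, eval_eq_sum_degreeLTEquiv hP, mul_sum, sum_mul]
  rw [sum_comm]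
  refine sum_congr rfl fun j _ => sum_congr rfl fun l _ => ?_
  rw [show degreeLTEquiv ℝ m ⟨P, hP⟩ l = P.coeff l from rfl]
  ring

theorem wronskianMatrix_expSum {m : ℕ} (A : Matrix (Fin m) (Fin n) ℝ) (x : ℝ) :
    wronskianMatrix (fun i => expSum (A i) κ c) x = A * (expVandermonde κ c x)ᵀ := by
  ext i l
  simp only [wronskianMatrix, of_apply, iteratedDeriv_expSum, expSum, mul_apply, transpose_apply,
    expVandermonde, mul_assoc]

end expSum

theorem det_wronskianMatrix_expSum_pos {m n : ℕ} {κ : Fin n → ℝ} (hκ : StrictMono κ)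
    (c : Fin n → ℝ) {A : Matrix (Fin m) (Fin n) ℝ} (hA : ∀ I, #I = m → 0 ≤ maxMinor A I)
    (hA₀ : ∃ I, 0 < maxMinor A I) (x : ℝ) :
    0 < (wronskianMatrix (fun i => expSum (A i) κ c) x).det := by
  rw [wronskianMatrix_expSum]
  exact det_mul_transpose_pos hA hA₀ fun I hI => maxMinor_expVandermonde_pos hκ c x hI

noncomputable def satoPoly {N : ℕ} (v : Fin N → ℝ) : ℝ[X] :=
  X ^ N - ∑ s : Fin N, C (v s) * X ^ (N - 1 - (s : ℕ))

section satoPoly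

variable {N : ℕ} (v : Fin N → ℝ)

@[simp]
theorem eval_satoPoly (ζ : ℝ) :
    (satoPoly v).eval ζ = ζ ^ N - ∑ s : Fin N, v s * ζ ^ (N - 1 - (s : ℕ)) := by
  simp [satoPoly, eval_finsetSum]

theorem degree_sum_C_mul_X_pow_lt :
    (∑ s : Fin N, C (v s) * X ^ (N - 1 - (s : ℕ))).degree < (N : WithBot ℕ) := by
  refine (degree_sum_le _ _).trans_lt ((Finset.sup_lt_iff (WithBot.bot_lt_coe N)).2 fun s _ => ?_)
  refine (degree_C_mul_X_pow_le _ _).trans_lt ?_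
  exact Nat.cast_lt.mpr (by have := s.isLt; omega)

theorem satoPoly_monic : (satoPoly v).Monic :=
  monic_X_pow_sub (degree_sum_C_mul_X_pow_lt v)

theorem natDegree_satoPoly : (satoPoly v).natDegree = N := by
  have h := degree_sum_C_mul_X_pow_lt v
  refine natDegree_eq_of_degree_eq_some ?_
  rw [satoPoly, degree_sub_eq_left_of_degree_lt (by rwa [degree_X_pow]), degree_X_pow]

theorem iteratedDeriv_expSum_sub_sum {n : ℕ} (κ c a : Fin n → ℝ) (x : ℝ) :
    iteratedDeriv N (expSum a κ c) x -
        ∑ s : Fin N, v s * iteratedDeriv (N - 1 - (s : ℕ)) (expSum a κ c) x =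
      expSum (fun j => a j * (satoPoly v).eval (κ j)) κ c x := by
  simp only [iteratedDeriv_expSum, expSum, eval_satoPoly, mul_sum]
  rw [sum_comm, ← sum_sub_distrib]
  refine sum_congr rfl fun j _ => ?_
  rw [mul_sub, sub_mul, mul_sum, sum_mul]
  congr 1
  exact sum_congr rfl fun s _ => by ring

end satoPoly

section wronskian

variable {m n : ℕ} (κ c : Fin n → ℝ) (A : Matrix (Fin m) (Fin n) ℝ) (x : ℝ)

theorem eq_of_monic_of_expSum_eval_eq_zero
    (hW : (wronskianMatrix (fun i => expSum (A i) κ c) x).det ≠ 0) {P R : ℝ[X]}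
    (hP : P.Monic) (hR : R.Monic) (hPm : P.natDegree = m) (hRm : R.natDegree = m)
    (hPx : ∀ i, expSum (fun j => A i j * P.eval (κ j)) κ c x = 0)
    (hRx : ∀ i, expSum (fun j => A i j * R.eval (κ j)) κ c x = 0) : P = R := by
  have hdeg : ∀ {Q : ℝ[X]}, Q.Monic → Q.natDegree = m → Q.degree = m := fun hQ hQm => by
    rw [degree_eq_natDegree hQ.ne_zero, hQm]
  have hD : P - R ∈ degreeLT ℝ m := by
    rw [mem_degreeLT, ← hdeg hP hPm]
    exact degree_sub_lt_left (by rw [hdeg hP hPm, hdeg hR hRm]) hP.ne_zero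
      (by rw [hP.leadingCoeff, hR.leadingCoeff])
  have hker : wronskianMatrix (fun i => expSum (A i) κ c) x *ᵥ
      degreeLTEquiv ℝ m ⟨P - R, hD⟩ = 0 := by
    funext i
    calc ∑ l : Fin m, iteratedDeriv l (expSum (A i) κ c) x * (P - R).coeff l
        = expSum (fun j => A i j * (P - R).eval (κ j)) κ c x := by
          rw [← sum_coeff_mul_iteratedDeriv_expSum κ c (A i) hD x]
          exact sum_congr rfl fun l _ => mul_comm _ _
      _ = 0 := by simp only [eval_sub, mul_sub, expSum_sub, hPx, hRx, sub_zero]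
  rw [← sub_eq_zero, ← degreeLTEquiv_eq_zero_iff_eq_zero hD]
  exact eq_zero_of_mulVec_eq_zero hW hker

theorem det_wronskianMatrix_expSum_eq_det_eval (P : Fin m → ℝ[X])
    (hP : ∀ l, (P l).Monic ∧ (P l).natDegree = l) :
    (wronskianMatrix (fun i => expSum (A i) κ c) x).det =
      (of fun i l => expSum (fun j => A i j * (P l).eval (κ j)) κ c x).det := by
  set V : Matrix (Fin m) (Fin m) ℝ := of fun l' l => (P l).coeff l'
  have hV : V.det = 1 := by
    have hV : V.IsUpperTriangular := fun l' l (h : l < l') =>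
      coeff_eq_zero_of_natDegree_lt (by rw [(hP l).2]; exact h)
    rw [det_of_isUpperTriangular hV]
    refine prod_eq_one fun l _ => ?_
    simpa only [V, of_apply, (hP l).2] using (hP l).1.coeff_natDegree
  have hWV : wronskianMatrix (fun i => expSum (A i) κ c) x * V =
      of fun i l => expSum (fun j => A i j * (P l).eval (κ j)) κ c x := by
    ext i l
    have hPl : P l ∈ degreeLT ℝ m := by
      rw [mem_degreeLT, degree_eq_natDegree (hP l).1.ne_zero, (hP l).2]
      exact Nat.cast_lt.mpr l.isLt
    rw [mul_apply, of_apply, ← sum_coeff_mul_iteratedDeriv_expSum κ c (A i) hPl x]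
    exact sum_congr rfl fun l' _ => mul_comm _ _
  rw [← hWV, det_mul, hV, mul_one]

end wronskian

theorem det_wronskianMatrix_expSum_eq_mul_det {k n : ℕ} (κ c : Fin n → ℝ)
    (A : Matrix (Fin (k + 1)) (Fin n) ℝ) {r : Fin (k + 1)} {p : Fin n} (hp : A r p = 1)
    (hrow : ∀ j, j ≠ p → A r j = 0) (x : ℝ) :
    (wronskianMatrix (fun i => expSum (A i) κ c) x).det =
      (-1) ^ (r : ℕ) * Real.exp (κ p * x + c p) *
        (wronskianMatrix
          (fun m => expSum (fun j => A (r.succAbove m) j * (κ j - κ p)) κ c) x).det := by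
  set P : Fin (k + 1) → ℝ[X] := Fin.cons 1 fun l : Fin k => X ^ (l : ℕ) * (X - C (κ p))
  have hP0 : P 0 = 1 := rfl
  have hPsucc : ∀ l : Fin k, P l.succ = X ^ (l : ℕ) * (X - C (κ p)) := fun _ => rfl
  have hP : ∀ l, (P l).Monic ∧ (P l).natDegree = l := Fin.cases ⟨monic_one, natDegree_one⟩
    fun l => ⟨hPsucc l ▸ (monic_X_pow _).mul (monic_X_sub_C _), by
      rw [hPsucc, (monic_X_pow _).natDegree_mul (monic_X_sub_C _), natDegree_X_pow,
        natDegree_X_sub_C, Fin.val_succ]⟩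
  have hrowP : ∀ l, expSum (fun j => A r j * (P l).eval (κ j)) κ c x =
      (P l).eval (κ p) * Real.exp (κ p * x + c p) :=
    fun l => expSum_mul_of_eq_single κ c hp hrow _ x
  rw [det_wronskianMatrix_expSum_eq_det_eval κ c A x P hP,
    det_succ_row_of_forall_ne_zero_eq_zero _ r fun l hl => ?_]
  · rw [of_apply, hrowP, hP0, eval_one, one_mul]
    congr 2
    ext m l
    simp only [submatrix_apply, of_apply, wronskianMatrix, iteratedDeriv_expSum, hPsucc,
      eval_mul, eval_pow, eval_X, eval_sub, eval_C]
    exact sum_congr rfl fun j _ => by ring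
  · obtain ⟨l, rfl⟩ := Fin.exists_succ_eq.mpr hl
    rw [of_apply, hrowP, hPsucc, eval_mul, eval_sub, eval_X, eval_C, sub_self, mul_zero,
      zero_mul]

theorem satoPoly_eq_X_sub_C_mul_satoPoly {k n : ℕ} (κ c : Fin n → ℝ)
    (A : Matrix (Fin (k + 1)) (Fin n) ℝ) {r : Fin (k + 1)} {p : Fin n} (hp : A r p = 1)
    (hrow : ∀ j, j ≠ p → A r j = 0) (x : ℝ)
    (hW : (wronskianMatrix (fun i => expSum (A i) κ c) x).det ≠ 0)
    {v : Fin (k + 1) → ℝ} {v' : Fin k → ℝ}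
    (hv : ∀ i, expSum (fun j => A i j * (satoPoly v).eval (κ j)) κ c x = 0)
    (hv' : ∀ m, expSum (fun j => A (r.succAbove m) j * (κ j - κ p) * (satoPoly v').eval (κ j))
      κ c x = 0) :
    satoPoly v = (X - C (κ p)) * satoPoly v' := by
  refine eq_of_monic_of_expSum_eval_eq_zero κ c A x hW (satoPoly_monic v)
    ((monic_X_sub_C _).mul (satoPoly_monic v')) (natDegree_satoPoly v) ?_ hv fun i => ?_
  · rw [(monic_X_sub_C _).natDegree_mul (satoPoly_monic v'), natDegree_X_sub_C,
      natDegree_satoPoly, add_comm]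
  rcases eq_or_ne i r with rfl | hi
  · rw [expSum_mul_of_eq_single κ c hp hrow, eval_mul, eval_sub, eval_X, eval_C, sub_self,
      zero_mul, zero_mul]
  · obtain ⟨m, rfl⟩ := Fin.exists_succAbove_eq hi
    rw [← hv' m]
    simp only [eval_mul, eval_sub, eval_X, eval_C, mul_assoc]

theorem rref_unit_row_reduced_darboux_general
    (k n : ℕ)
    (κ c : Fin n → ℝ) (hκ : StrictMono κ)
    (A : Matrix (Fin (k + 1)) (Fin n) ℝ)
    (hTNN : ∀ I : Finset (Fin n), I.card = k + 1 → 0 ≤ maxMinor A I)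
    (piv : Fin (k + 1) → Fin n) (hpiv : StrictMono piv)
    (hpivot1 : ∀ m, A m (piv m) = 1)
    (hpivot0 : ∀ m m', m' ≠ m → A m' (piv m) = 0)
    (f : Fin (k + 1) → ℝ → ℝ)
    (hf : ∀ i x, f i x = ∑ j, A i j * Real.exp (κ j * x + c j))
    (w : Fin (k + 1) → ℝ → ℝ)
    (hw : ∀ x i, iteratedDeriv (k + 1) (f i) x =
      ∑ s : Fin (k + 1), w s x * iteratedDeriv (k - (s : ℕ)) (f i) x)
    (r : Fin (k + 1))
    (hrow : ∀ j, j ≠ piv r → A r j = 0)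
    (g : Fin k → ℝ → ℝ)
    (hg : ∀ m x, g m x = deriv (f (r.succAbove m)) x - κ (piv r) * f (r.succAbove m) x) :
    (∀ x : ℝ,
      Matrix.det (Matrix.of fun m l : Fin k => iteratedDeriv (l : ℕ) (g m) x) ≠ 0) ∧
    (∀ w' : Fin k → ℝ → ℝ,
      (∀ x m, iteratedDeriv k (g m) x =
        ∑ s : Fin k, w' s x * iteratedDeriv (k - 1 - (s : ℕ)) (g m) x) →
      ∀ ζ x : ℝ,
        ζ ^ (k + 1) - ∑ s : Fin (k + 1), w s x * ζ ^ (k - (s : ℕ)) =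
          (ζ - κ (piv r)) *
            (ζ ^ k - ∑ s : Fin k, w' s x * ζ ^ (k - 1 - (s : ℕ)))) ∧
    (∀ x : ℝ,
      κ (piv r) ^ (k + 1) -
        ∑ s : Fin (k + 1), w s x * κ (piv r) ^ (k - (s : ℕ)) = 0) := by
  obtain rfl : f = fun i => expSum (A i) κ c := funext fun i => funext (hf i)
  obtain rfl : g = fun m => expSum (fun j => A (r.succAbove m) j * (κ j - κ (piv r))) κ c :=
    funext fun m => funext fun x => (hg m x).trans (deriv_expSum_sub_mul κ c _ _ x)
  have hWf : ∀ x, 0 < (wronskianMatrix (fun i => expSum (A i) κ c) x).det :=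
    det_wronskianMatrix_expSum_pos hκ c hTNN
      ⟨_, (maxMinor_image_pivots_eq_one hpiv hpivot1 hpivot0).symm ▸ one_pos⟩
  have hsato : ∀ x i, expSum (fun j => A i j * (satoPoly (w · x)).eval (κ j)) κ c x = 0 := by
    intro x i
    rw [← iteratedDeriv_expSum_sub_sum, sub_eq_zero, hw x i]
    simp only [Nat.add_sub_cancel]
  refine ⟨fun x => ?_, fun w' hw' ζ x => ?_, fun x => ?_⟩
  · have h := det_wronskianMatrix_expSum_eq_mul_det κ c A (hpivot1 r) hrow x
    exact right_ne_zero_of_mul (h ▸ (hWf x).ne')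
  · have hfac := satoPoly_eq_X_sub_C_mul_satoPoly κ c A (hpivot1 r) hrow x (hWf x).ne' (hsato x)
      fun m => by rw [← iteratedDeriv_expSum_sub_sum, sub_eq_zero, hw' x m]
    simpa only [eval_satoPoly, eval_mul, eval_sub, eval_X, eval_C, Nat.add_sub_cancel]
      using congrArg (eval ζ) hfac
  · have h := hsato x r
    rw [expSum_mul_of_eq_single κ c (hpivot1 r) hrow, mul_eq_zero, eval_satoPoly] at h
    simpa only [Nat.add_sub_cancel] using h.resolve_right (Real.exp_ne_zero _)

/-- for TNN soliton data in RREF (here with `k+1` rows) whose `r`-th row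
is the standard unit vector at the pivot column `piv r`, the functions
`g_m = f_m' - κ_{piv r} f_m` (for rows `m ≠ r`, indexed via `r.succAbove`) have
nowhere vanishing `k × k` Wronskian, and the reduced Darboux coefficients `w'`
solving `g_m^{(k)} = Σ_s w'_s g_m^{(k-s)}` give the factorization
`ζ^{k+1} - Σ_s w_s(x) ζ^{k+1-s} = (ζ - κ_{piv r})(ζ^k - Σ_s w'_s(x) ζ^{k-s})`;
in particular `κ_{piv r}` is a root of the Sato characteristic polynomial. -/
theorem rref_unit_row_reduced_darboux
    (k n : ℕ) (hkn : k + 1 < n)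
    (κ c : Fin n → ℝ) (hκ : StrictMono κ)
    (A : Matrix (Fin (k + 1)) (Fin n) ℝ) (hrank : A.rank = k + 1)
    (hTNN : ∀ I : Finset (Fin n), I.card = k + 1 → 0 ≤ maxMinor A I)
    (piv : Fin (k + 1) → Fin n) (hpiv : StrictMono piv)
    (hpivot1 : ∀ m, A m (piv m) = 1)
    (hpivot0 : ∀ m m', m' ≠ m → A m' (piv m) = 0)
    (hlt : ∀ m j, j < piv m → A m j = 0)
    (f : Fin (k + 1) → ℝ → ℝ)
    (hf : ∀ i x, f i x = ∑ j, A i j * Real.exp (κ j * x + c j))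
    (w : Fin (k + 1) → ℝ → ℝ)
    (hw : ∀ x i, iteratedDeriv (k + 1) (f i) x =
      ∑ s : Fin (k + 1), w s x * iteratedDeriv (k - (s : ℕ)) (f i) x)
    (r : Fin (k + 1))
    (hrow : ∀ j, j ≠ piv r → A r j = 0)
    (g : Fin k → ℝ → ℝ)
    (hg : ∀ m x, g m x = deriv (f (r.succAbove m)) x - κ (piv r) * f (r.succAbove m) x) :
    (∀ x : ℝ,
      Matrix.det (Matrix.of fun m l : Fin k => iteratedDeriv (l : ℕ) (g m) x) ≠ 0) ∧
    (∀ w' : Fin k → ℝ → ℝ,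
      (∀ x m, iteratedDeriv k (g m) x =
        ∑ s : Fin k, w' s x * iteratedDeriv (k - 1 - (s : ℕ)) (g m) x) →
      ∀ ζ x : ℝ,
        ζ ^ (k + 1) - ∑ s : Fin (k + 1), w s x * ζ ^ (k - (s : ℕ)) =
          (ζ - κ (piv r)) *
            (ζ ^ k - ∑ s : Fin k, w' s x * ζ ^ (k - 1 - (s : ℕ)))) ∧
    (∀ x : ℝ,
      κ (piv r) ^ (k + 1) -
        ∑ s : Fin (k + 1), w s x * κ (piv r) ^ (k - (s : ℕ)) = 0) :=
  rref_unit_row_reduced_darboux_general k n κ c hκ A hTNN piv hpiv hpivot1 hpivot0 f hf w hw r hrow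
    g hg
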